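/- arXiv:2507.13047 — 10 statements merged into one kernel-verified Lean document; each statement's English description precedes it below -/
import Mathlib

section
/- Let X be a finite set of idempotent elements of a commutative ring A. Then there exists a complete set of orthogonal idempotents T of A (i.e., a finite set of nonzero idempotents with e·e' = 0 for distinct e, e' in T and sum over T equal to 1) such that every element of X is a sum of pairwise distinct elements of T. -/
open scoped Classical

section Aux
variable {A : Type*} [CommRing A]

private lemma aux_inj {S : Finset A} {g : A}
    (hI : ∀ e ∈ S, IsIdempotentElem e)
    (hO : ∀ e ∈ S, ∀ e' ∈ S, e ≠ e' → e * e' = 0)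
    (hg : IsIdempotentElem g) :
    ∀ x ∈ S.filter (fun e => e * g ≠ 0), ∀ y ∈ S.filter (fun e => e * g ≠ 0),
      x * g = y * g → x = y := by
  intro x hx y hy h
  rw [Finset.mem_filter] at hx hy
  by_contra hne
  apply hx.2
  have h2 : (x * g) * (x * g) = x * g := by
    rw [mul_mul_mul_comm, hI x hx.1, hg]
  have h1 : (x * g) * (y * g) = 0 := by
    rw [mul_mul_mul_comm, hO x hx.1 y hy.1 hne, zero_mul]
  have h3 : x * g = (x * g) * (y * g) := by rw [← h, h2]
  rw [h3]; exact h1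

private lemma aux_sum {S : Finset A} {g : A}
    (hI : ∀ e ∈ S, IsIdempotentElem e)
    (hO : ∀ e ∈ S, ∀ e' ∈ S, e ≠ e' → e * e' = 0)
    (hg : IsIdempotentElem g) :
    ∑ a ∈ (S.filter (fun e => e * g ≠ 0)).image (· * g), a = ∑ e ∈ S, e * g := by
  rw [Finset.sum_image (aux_inj hI hO hg)]
  exact Finset.sum_filter_ne_zero S

/-- The refined set obtained from `S` by an idempotent `f`. -/
private noncomputable def refineSet (S : Finset A) (f : A) : Finset A :=
  (S.filter (fun e => e * f ≠ 0)).image (· * f) ∪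
  (S.filter (fun e => e * (1 - f) ≠ 0)).image (· * (1 - f))

private lemma one_sub_idem {f : A} (hf : IsIdempotentElem f) :
    IsIdempotentElem (1 - f) := hf.one_sub

private lemma refineSet_sum {S : Finset A} {f : A}
    (hI : ∀ e ∈ S, IsIdempotentElem e)
    (hO : ∀ e ∈ S, ∀ e' ∈ S, e ≠ e' → e * e' = 0)
    (hf : IsIdempotentElem f) :
    ∑ a ∈ refineSet S f, a = ∑ e ∈ S, e := by
  have hff : f * (1 - f) = 0 := by
    rw [mul_sub, mul_one, hf, sub_self]
  have hdisj : Disjoint ((S.filter (fun e => e * f ≠ 0)).image (· * f))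
      ((S.filter (fun e => e * (1 - f) ≠ 0)).image (· * (1 - f))) := by
    rw [Finset.disjoint_left]
    intro a ha ha'
    simp only [Finset.mem_image, Finset.mem_filter] at ha ha'
    obtain ⟨e, ⟨heS, he0⟩, rfl⟩ := ha
    obtain ⟨e', ⟨he'S, he'0⟩, heq⟩ := ha'
    apply he0
    have h2 : (e * f) * (e * f) = e * f := by
      rw [mul_mul_mul_comm, hI e heS, hf]
    have h1 : (e * f) * (e' * (1 - f)) = 0 := by
      rw [mul_mul_mul_comm, hff, mul_zero]
    rw [heq] at h1
    rw [← h2]; exact h1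
  rw [refineSet, Finset.sum_union hdisj, aux_sum hI hO hf, aux_sum hI hO (one_sub_idem hf),
    ← Finset.sum_add_distrib]
  apply Finset.sum_congr rfl
  intro e _
  ring

private lemma refineSet_mono {S T : Finset A} (f : A) (h : S ⊆ T) :
    refineSet S f ⊆ refineSet T f := by
  unfold refineSet
  apply Finset.union_subset_union <;>
    exact Finset.image_subset_image (Finset.filter_subset_filter _ h)

end Aux

theorem stmt_0 {A : Type*} [CommRing A] (X : Finset A)
    (hX : ∀ e ∈ X, IsIdempotentElem e) :
    ∃ T : Finset A,
      (∀ e ∈ T, IsIdempotentElem e ∧ e ≠ 0) ∧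
      (∀ e ∈ T, ∀ e' ∈ T, e ≠ e' → e * e' = 0) ∧
      (∑ e ∈ T, e = 1) ∧
      ∀ x ∈ X, ∃ S ⊆ T, x = ∑ e ∈ S, e := by
  induction X using Finset.induction with
  | empty =>
      by_cases h1 : (1 : A) = 0
      · exact ⟨∅, by simp, by simp, by simp [← h1], by simp⟩
      · refine ⟨{1}, ?_, ?_, by simp, by simp⟩
        · intro e he; rw [Finset.mem_singleton] at he; subst he
          exact ⟨by simp [IsIdempotentElem], h1⟩
        · intro e he e' he'
          rw [Finset.mem_singleton] at he he'; subst he; subst he'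
          intro h; exact absurd rfl h
  | @insert f X' hfX ih =>
      have hf : IsIdempotentElem f := hX f (Finset.mem_insert_self f X')
      obtain ⟨T, hTI, hTO, hT1, hTrep⟩ := ih (fun e he => hX e (Finset.mem_insert_of_mem he))
      have hTI' : ∀ e ∈ T, IsIdempotentElem e := fun e he => (hTI e he).1
      refine ⟨refineSet T f, ?_, ?_, ?_, ?_⟩
      · -- idempotent and nonzero
        intro a ha
        simp only [refineSet, Finset.mem_union, Finset.mem_image, Finset.mem_filter] at ha
        rcases ha with ⟨e, ⟨heS, he0⟩, rfl⟩ | ⟨e, ⟨heS, he0⟩, rfl⟩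
        · exact ⟨by rw [IsIdempotentElem, mul_mul_mul_comm, hTI' e heS, hf], he0⟩
        · exact ⟨by rw [IsIdempotentElem, mul_mul_mul_comm, hTI' e heS,
            (one_sub_idem hf : IsIdempotentElem (1 - f))], he0⟩
      · -- orthogonality
        intro a ha b hb hab
        have hff : f * (1 - f) = 0 := by
          rw [mul_sub, mul_one, hf, sub_self]
        simp only [refineSet, Finset.mem_union, Finset.mem_image, Finset.mem_filter] at ha hb
        rcases ha with ⟨e, ⟨heS, he0⟩, rfl⟩ | ⟨e, ⟨heS, he0⟩, rfl⟩ <;>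
          rcases hb with ⟨e', ⟨he'S, he'0⟩, rfl⟩ | ⟨e', ⟨he'S, he'0⟩, rfl⟩
        · have hne : e ≠ e' := fun h => hab (by rw [h])
          rw [mul_mul_mul_comm, hTO e heS e' he'S hne, zero_mul]
        · rw [mul_mul_mul_comm, hff, mul_zero]
        · rw [mul_mul_mul_comm, mul_comm (1 - f) f, hff, mul_zero]
        · have hne : e ≠ e' := fun h => hab (by rw [h])
          rw [mul_mul_mul_comm, hTO e heS e' he'S hne, zero_mul]
      · rw [refineSet_sum hTI' hTO hf, hT1]
      · -- representation
        intro x hx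
        rcases Finset.mem_insert.mp hx with rfl | hx'
        · refine ⟨(T.filter (fun e => e * x ≠ 0)).image (· * x),
            by unfold refineSet; exact Finset.subset_union_left, ?_⟩
          rw [aux_sum hTI' hTO hf, ← Finset.sum_mul, hT1, one_mul]
        · obtain ⟨S, hST, hxS⟩ := hTrep x hx'
          refine ⟨refineSet S f, refineSet_mono f hST, ?_⟩
          rw [refineSet_sum (fun e he => hTI' e (hST he))
            (fun e he e' he' => hTO e (hST he) e' (hST he')) hf, hxS]
end

section
/- Let A be a k-algebra over a nonzero commutative ring k. Suppose A is free as a k-module and there exist idempotents e_1, …, e_n of k such that A is isomorphic as a k-algebra to the product ∏_{i=1}^n (e_i·k). Then A is isomorphic as a k-algebra to k^r for some natural number r (namely, the rank of A as a free k-module). -/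
/-!
For `f : Fin n → Fin 2` the products `ε_f = ∏ᵢ (eᵢ or 1 - eᵢ)` (`minterm e f`) form a complete
family of orthogonal idempotents of `k`, so every `k`-algebra `B` splits as `∏_f k_f ⊗ B` with
`k_f = k ⧸ (1 - ε_f)`. In `k_f` each `eᵢ` becomes `0` or `1`, hence `k_f ⊗ A ≅ k_f ^ {i | f i = 0}`;
since base change preserves the rank of the free module `A`, this set has `rank A` elements
whenever `k_f ≠ 0`. So `k_f ⊗ A ≅ k_f ⊗ k ^ (rank A)` for every `f`, and reassembling the factors
gives `A ≅ k ^ (rank A)`.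
-/

open TensorProduct

section Idempotents

variable {R : Type*} [CommSemiring R] {ι : Type*} [Fintype ι] [DecidableEq ι] {J : ι → Type*}
  {g : ∀ i, J i → R}

theorem CompleteOrthogonalIdempotents.pi_prod [∀ i, Fintype (J i)]
    (hg : ∀ i, CompleteOrthogonalIdempotents (g i)) :
    CompleteOrthogonalIdempotents fun f : (∀ i, J i) ↦ ∏ i, g i (f i) where
  idem f := by
    simp only [IsIdempotentElem, ← Finset.prod_mul_distrib, ((hg _).idem _).eq]
  ortho f f' hff' := by
    obtain ⟨i, hi⟩ := Function.ne_iff.mp hff'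
    rw [← Finset.prod_mul_distrib]
    exact Finset.prod_eq_zero (Finset.mem_univ i) ((hg i).ortho hi)
  complete := by
    rw [← Fintype.prod_sum]
    simp only [(hg _).complete, Finset.prod_const_one]

theorem prod_mul_apply_of_isIdempotentElem (hg : ∀ i j, IsIdempotentElem (g i j))
    (f : ∀ i, J i) (i : ι) : (∏ j, g j (f j)) * g i (f i) = ∏ j, g j (f j) := by
  rw [← Finset.mul_prod_erase _ _ (Finset.mem_univ i), mul_right_comm, (hg i _).eq]

end Idempotents

theorem Ideal.Quotient.mk_span_one_sub_eq_one {R : Type*} [CommRing R] {x y : R}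
    (h : x * y = x) : Ideal.Quotient.mk (Ideal.span {1 - x}) y = 1 := by
  have hx : Ideal.Quotient.mk (Ideal.span {1 - x}) x = 1 := by
    rw [← map_one (Ideal.Quotient.mk _), Ideal.Quotient.eq, Ideal.mem_span_singleton']
    exact ⟨-1, by ring⟩
  rw [← one_mul (Ideal.Quotient.mk _ y), ← hx, ← map_mul, h, hx]

theorem Ideal.map_span_one_sub {k R : Type*} [CommRing k] [CommRing R] [Algebra k R] (e : k) :
    (Ideal.span {1 - e}).map (algebraMap k R) = Ideal.span {1 - algebraMap k R e} := by
  simp [Ideal.map_span]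

noncomputable def CompleteOrthogonalIdempotents.algEquivPiTensor {k : Type*} [CommRing k]
    {I : Type*} [Fintype I] {ε : I → k} (hε : CompleteOrthogonalIdempotents ε)
    (B : Type*) [CommRing B] [Algebra k B] :
    B ≃ₐ[k] Π i, (k ⧸ Ideal.span {1 - ε i}) ⊗[k] B :=
  (AlgEquiv.ofBijective (AlgHom.pi fun _ ↦ Ideal.Quotient.mkₐ k _)
    (hε.map (algebraMap k B)).bijective_pi).trans <|
  AlgEquiv.piCongrRight fun _ ↦
    (Ideal.quotientEquivAlgOfEq k (Ideal.map_span_one_sub _).symm).trans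
      ((Algebra.TensorProduct.quotIdealMapEquivQuotTensor B _).restrictScalars k)

noncomputable def AlgEquiv.piSubtypeOfSubsingleton {R ι : Type*} [CommSemiring R] (p : ι → Prop)
    [DecidablePred p] {C : ι → Type*} [∀ i, Semiring (C i)] [∀ i, Algebra R (C i)]
    (φ : ∀ i, p i → (C i ≃ₐ[R] R)) (hC : ∀ i, ¬ p i → Subsingleton (C i)) :
    (Π i, C i) ≃ₐ[R] ({i // p i} → R) :=
  AlgEquiv.ofBijective (AlgHom.pi fun j ↦ (φ j j.2).toAlgHom.comp (Pi.evalAlgHom R C j)) <| by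
    refine ⟨fun x y hxy ↦ funext fun i ↦ ?_, fun c ↦ ?_⟩
    · by_cases hi : p i
      · exact (φ i hi).injective (congrFun hxy ⟨i, hi⟩)
      · exact (hC i hi).elim _ _
    · refine ⟨fun i ↦ if hi : p i then (φ i hi).symm (c ⟨i, hi⟩) else 0, funext fun j ↦ ?_⟩
      simp [j.2]

theorem nonempty_algEquiv_pi_of_card_eq {R ι ι' : Type*} [CommRing R] [Fintype ι] [Fintype ι']
    (h : Nontrivial R → Fintype.card ι = Fintype.card ι') :
    Nonempty ((ι → R) ≃ₐ[R] (ι' → R)) := by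
  rcases subsingleton_or_nontrivial R with hR | hR
  · have := uniqueOfSubsingleton (0 : R)
    exact ⟨AlgEquiv.ofRingEquiv (f := RingEquiv.ofUnique) fun _ ↦ Subsingleton.elim _ _⟩
  · exact ⟨AlgEquiv.piCongrLeft' R (fun _ ↦ R) (Fintype.equivOfCardEq (h hR))⟩

theorem Module.finrank_eq_card_of_baseChange_linearEquiv {k R M ι : Type*} [CommRing k]
    [Nontrivial k] [CommRing R] [Nontrivial R] [Algebra k R] [AddCommGroup M] [Module k M]
    [Module.Free k M] [Fintype ι] (ψ : R ⊗[k] M ≃ₗ[R] (ι → R)) :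
    Module.finrank k M = Fintype.card ι := by
  rw [← Module.finrank_baseChange (R := R), ψ.finrank_eq, Module.finrank_fintype_fun_eq_card]

section QuotSpanOneSub

variable {k R : Type*} [CommRing k] [CommRing R] [Algebra k R]

noncomputable def Algebra.TensorProduct.quotSpanOneSubEquivOfAlgebraMapEqOne {e : k}
    (h : algebraMap k R e = 1) : R ⊗[k] (k ⧸ Ideal.span {1 - e}) ≃ₐ[R] R :=
  (Algebra.TensorProduct.quotIdealMapEquivTensorQuot R (Ideal.span {1 - e})).symm.trans <|
    (Ideal.quotientEquivAlgOfEq R (by rw [Ideal.map_span_one_sub, h, sub_self,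
      Ideal.span_singleton_eq_bot])).trans (AlgEquiv.quotientBot R R)

theorem Algebra.TensorProduct.subsingleton_quotSpanOneSub_of_algebraMap_eq_zero {e : k}
    (h : algebraMap k R e = 0) : Subsingleton (R ⊗[k] (k ⧸ Ideal.span {1 - e})) := by
  have : Subsingleton (R ⧸ (Ideal.span {1 - e}).map (algebraMap k R)) := by
    rw [Ideal.Quotient.subsingleton_iff, Ideal.map_span_one_sub, h, sub_zero,
      Ideal.span_singleton_one]
  exact (quotIdealMapEquivTensorQuot R (Ideal.span {1 - e})).symm.toEquiv.subsingleton

variable {ι : Type*} [Fintype ι] [DecidableEq ι] {e : ι → k} (p : ι → Prop) [DecidablePred p]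

noncomputable def Algebra.TensorProduct.piQuotSpanOneSubEquiv
    (h₁ : ∀ i, p i → algebraMap k R (e i) = 1) (h₀ : ∀ i, ¬ p i → algebraMap k R (e i) = 0) :
    R ⊗[k] (Π i, k ⧸ Ideal.span {1 - e i}) ≃ₐ[R] ({i // p i} → R) :=
  (Algebra.TensorProduct.piRight k R R _).trans <|
    AlgEquiv.piSubtypeOfSubsingleton p
      (fun i hi ↦ quotSpanOneSubEquivOfAlgebraMapEqOne (h₁ i hi))
      (fun i hi ↦ subsingleton_quotSpanOneSub_of_algebraMap_eq_zero (h₀ i hi))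

theorem nonempty_tensor_algEquiv_pi_finrank {A : Type*} [Nontrivial k] [CommRing A]
    [Algebra k A] [Module.Free k A] (φ : A ≃ₐ[k] Π i, k ⧸ Ideal.span {1 - e i})
    (h₁ : ∀ i, p i → algebraMap k R (e i) = 1) (h₀ : ∀ i, ¬ p i → algebraMap k R (e i) = 0) :
    Nonempty (R ⊗[k] A ≃ₐ[R] (Fin (Module.finrank k A) → R)) := by
  let ψ : R ⊗[k] A ≃ₐ[R] ({i // p i} → R) :=
    (Algebra.TensorProduct.congr AlgEquiv.refl φ).trans
      (Algebra.TensorProduct.piQuotSpanOneSubEquiv p h₁ h₀)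
  have hcard (_ : Nontrivial R) :
      Fintype.card {i // p i} = Fintype.card (Fin (Module.finrank k A)) := by
    rw [Fintype.card_fin, Module.finrank_eq_card_of_baseChange_linearEquiv ψ.toLinearEquiv]
  obtain ⟨χ⟩ := nonempty_algEquiv_pi_of_card_eq hcard
  exact ⟨ψ.trans χ⟩

end QuotSpanOneSub

section Minterm

variable {k : Type*} [CommRing k] {ι : Type*} [Fintype ι] [DecidableEq ι] {e : ι → k}

def minterm (e : ι → k) (f : ι → Fin 2) : k :=
  ∏ i, ![e i, 1 - e i] (f i)

theorem completeOrthogonalIdempotents_minterm (he : ∀ i, IsIdempotentElem (e i)) :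
    CompleteOrthogonalIdempotents (minterm e) :=
  .pi_prod fun i ↦ .of_isIdempotentElem (he i)

theorem minterm_mul_apply (he : ∀ i, IsIdempotentElem (e i)) (f : ι → Fin 2) (i : ι) :
    minterm e f * ![e i, 1 - e i] (f i) = minterm e f :=
  prod_mul_apply_of_isIdempotentElem (g := fun i ↦ ![e i, 1 - e i])
    (fun i ↦ (CompleteOrthogonalIdempotents.of_isIdempotentElem (he i)).idem) f i

theorem mk_minterm_eq_one (he : ∀ i, IsIdempotentElem (e i)) {f : ι → Fin 2} {i : ι}
    (hi : f i = 0) : Ideal.Quotient.mk (Ideal.span {1 - minterm e f}) (e i) = 1 := by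
  simpa [hi] using Ideal.Quotient.mk_span_one_sub_eq_one (minterm_mul_apply he f i)

theorem mk_minterm_eq_zero (he : ∀ i, IsIdempotentElem (e i)) {f : ι → Fin 2} {i : ι}
    (hi : f i ≠ 0) : Ideal.Quotient.mk (Ideal.span {1 - minterm e f}) (e i) = 0 := by
  have hi : f i = 1 := by omega
  simpa [hi] using Ideal.Quotient.mk_span_one_sub_eq_one (minterm_mul_apply he f i)

end Minterm

theorem stmt_1 {k A : Type*} [CommRing k] [Nontrivial k] [CommRing A] [Algebra k A]
    [Module.Free k A] (n : ℕ) (e : Fin n → k) (he : ∀ i, IsIdempotentElem (e i))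
    (h : Nonempty (A ≃ₐ[k] ((i : Fin n) → k ⧸ Ideal.span {1 - e i}))) :
    ∃ r : ℕ, Nonempty (A ≃ₐ[k] (Fin r → k)) := by
  obtain ⟨φ⟩ := h
  have hε := completeOrthogonalIdempotents_minterm he
  have ψ (f : Fin n → Fin 2) := (nonempty_tensor_algEquiv_pi_finrank (fun i ↦ f i = 0) φ
    (fun _ ↦ mk_minterm_eq_one he) (fun _ ↦ mk_minterm_eq_zero he)).some
  refine ⟨Module.finrank k A, ⟨(hε.algEquivPiTensor A).trans <|
    (AlgEquiv.piCongrRight fun f ↦ ?_).trans (hε.algEquivPiTensor _).symm⟩⟩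
  exact ((ψ f).trans (Algebra.TensorProduct.piScalarRight k _ _ _).symm).restrictScalars k
end

section
/- Let P be a monic polynomial in k[X] over a nonzero commutative ring k. The following are equivalent: (1) the k-algebra k[X]/(P) is isomorphic to k^deg(P); (2) P factors as a product of monic degree-1 polynomials that are pairwise comaximal; (3) P factors as a product of monic degree-1 polynomials and P is comaximal with its derivative P'. -/
/-!
A `k`-algebra map `k[X]/(P) → k` is evaluation at a root of `P`, so an isomorphism with `kⁿ`
yields roots `a₁, …, aₙ`; the preimage of a standard idempotent is a polynomial `q` with
`q(aᵢ) = 1`, `q(aⱼ) = 0`, and `aᵢ - aⱼ ∣ q(aᵢ) - q(aⱼ)` makes `aᵢ - aⱼ` a unit. The pairwise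
comaximal `X - aᵢ` then all divide `P`, and comparing degrees gives `P = ∏ (X - aᵢ)`.
Conversely, the Chinese remainder theorem gives `k[X]/(∏ (X - aᵢ)) ≃ ∏ k[X]/(X - aᵢ) ≃ kⁿ`.
Finally `X - a` is comaximal with `g` iff `g(a)` is a unit, and `P'(aᵢ) = ∏_{j ≠ i} (aᵢ - aⱼ)`.
-/

open Polynomial

namespace Polynomial

variable {k : Type*} [CommRing k] {ι : Type*}

theorem isCoprime_X_sub_C_iff_isUnit_eval {a : k} {g : k[X]} :
    IsCoprime (X - C a) g ↔ IsUnit (g.eval a) := by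
  refine ⟨fun h ↦ by simpa [isCoprime_zero_left] using h.map (evalRingHom a), fun h ↦ ?_⟩
  obtain ⟨q, hq⟩ := X_sub_C_dvd_sub_C_eval (a := a) (p := g)
  rw [sub_eq_iff_eq_add'.mp hq, IsCoprime.add_mul_left_right_iff]
  exact isCoprime_comm.mp (isCoprime_one_left.of_isCoprime_of_dvd_left (isUnit_C.mpr h).dvd)

theorem isCoprime_X_sub_C_X_sub_C_iff {a b : k} :
    IsCoprime (X - C a) (X - C b) ↔ IsUnit (a - b) := by
  simp [isCoprime_X_sub_C_iff_isUnit_eval]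

theorem eval_derivative_prod_X_sub_C [Fintype ι] [DecidableEq ι] (a : ι → k) (i : ι) :
    (derivative (∏ j, (X - C (a j)))).eval (a i) = ∏ j ∈ Finset.univ.erase i, (a i - a j) := by
  rw [← Finset.mul_prod_erase _ _ (Finset.mem_univ i), derivative_mul, derivative_X_sub_C]
  simp [eval_prod]

theorem isCoprime_prod_X_sub_C_derivative_iff [Fintype ι] (a : ι → k) :
    IsCoprime (∏ i, (X - C (a i))) (derivative (∏ i, (X - C (a i)))) ↔
      Pairwise fun i j ↦ IsCoprime (X - C (a i)) (X - C (a j)) := by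
  classical
  simp only [IsCoprime.prod_left_iff, Finset.mem_univ, forall_const,
    isCoprime_X_sub_C_iff_isUnit_eval, eval_derivative_prod_X_sub_C, IsUnit.prod_iff,
    Finset.mem_erase, and_true, eval_sub, eval_X, eval_C]
  exact ⟨fun h i j hij ↦ h i j hij.symm, fun h i j hji ↦ h hji.symm⟩

theorem eq_prod_X_sub_C_of_isRoot [Fintype ι] {P : k[X]} (hP : P.Monic)
    (hdeg : P.natDegree = Fintype.card ι) {a : ι → k}
    (hco : Pairwise fun i j ↦ IsCoprime (X - C (a i)) (X - C (a j)))
    (hroot : ∀ i, P.IsRoot (a i)) : P = ∏ i, (X - C (a i)) := by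
  nontriviality k
  have hdvd : ∏ i, (X - C (a i)) ∣ P :=
    Finset.prod_dvd_of_coprime (fun i _ j _ hij ↦ hco hij) fun i _ ↦ dvd_iff_isRoot.mpr (hroot i)
  exact eq_of_monic_of_dvd_of_natDegree_le (monic_prod_of_monic _ _ fun i _ ↦ monic_X_sub_C _)
    hP hdvd (by simp [hdeg])

theorem exists_pairwise_isCoprime_isRoot_of_algEquiv_pi {P : k[X]}
    (φ : (k[X] ⧸ Ideal.span {P}) ≃ₐ[k] (ι → k)) :
    ∃ a : ι → k, (Pairwise fun i j ↦ IsCoprime (X - C (a i)) (X - C (a j))) ∧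
      ∀ i, P.IsRoot (a i) := by
  classical
  let ev (i : ι) : k[X] →ₐ[k] k :=
    (Pi.evalAlgHom k (fun _ ↦ k) i).comp (φ.toAlgHom.comp (Ideal.Quotient.mkₐ k _))
  have hev (i : ι) (q : k[X]) : ev i q = q.eval (ev i X) := by
    simpa [coe_aeval_eq_eval] using (aeval_algHom_apply (ev i) X q).symm
  refine ⟨fun i ↦ ev i X, fun i j hij ↦ ?_, fun i ↦ ?_⟩
  · obtain ⟨y, hy⟩ := φ.surjective (Pi.single i 1)
    obtain ⟨q, rfl⟩ := Ideal.Quotient.mk_surjective y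
    have hqi : ev i q = 1 := by simp [ev, hy]
    have hqj : ev j q = 0 := by simp [ev, hy, hij]
    rw [isCoprime_X_sub_C_X_sub_C_iff]
    apply isUnit_of_dvd_one
    simpa [← hev, hqi, hqj] using sub_dvd_eval_sub (ev i X) (ev j X) q
  · rw [IsRoot, ← hev]
    simp [ev]

noncomputable def quotientProdXSubCAlgEquiv [Fintype ι] (a : ι → k)
    (hco : Pairwise fun i j ↦ IsCoprime (X - C (a i)) (X - C (a j))) :
    (k[X] ⧸ Ideal.span {∏ i, (X - C (a i))}) ≃ₐ[k] (ι → k) :=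
  (Ideal.quotientEquivAlgOfEq k (Ideal.iInf_span_singleton fun _ _ hij ↦ hco hij).symm).trans <|
    (AlgEquiv.ofRingEquiv (f := Ideal.quotientInfRingEquivPiQuotient _ fun _ _ hij ↦
      (Ideal.isCoprime_span_singleton_iff _ _).mpr (hco hij)) fun _ ↦ rfl).trans <|
    AlgEquiv.piCongrRight fun i ↦ quotientSpanXSubCAlgEquiv (a i)

end Polynomial

theorem stmt_7_general {k : Type*} [CommRing k] (P : Polynomial k) (hP : P.Monic) :
    List.TFAE
      [ Nonempty ((Polynomial k ⧸ Ideal.span {P}) ≃ₐ[k] (Fin P.natDegree → k)),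
        ∃ a : Fin P.natDegree → k,
          P = ∏ i, (Polynomial.X - Polynomial.C (a i)) ∧
          ∀ i j, i ≠ j →
            IsCoprime (Polynomial.X - Polynomial.C (a i)) (Polynomial.X - Polynomial.C (a j)),
        (∃ a : Fin P.natDegree → k, P = ∏ i, (Polynomial.X - Polynomial.C (a i))) ∧
          IsCoprime P (Polynomial.derivative P) ] := by
  tfae_have 2 → 1 := fun ⟨a, hPa, hco⟩ ↦
    ⟨(Ideal.quotientEquivAlgOfEq k (by rw [← hPa])).trans
      (quotientProdXSubCAlgEquiv a fun i j ↦ hco i j)⟩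
  tfae_have 2 ↔ 3 := by
    constructor
    · rintro ⟨a, hPa, hco⟩
      refine ⟨⟨a, hPa⟩, ?_⟩
      rw [hPa]
      exact (isCoprime_prod_X_sub_C_derivative_iff a).mpr fun i j ↦ hco i j
    · rintro ⟨⟨a, hPa⟩, hcop⟩
      rw [hPa] at hcop
      exact ⟨a, hPa, fun i j hij ↦ (isCoprime_prod_X_sub_C_derivative_iff a).mp hcop hij⟩
  tfae_have 1 → 2 := fun ⟨φ⟩ ↦ by
    obtain ⟨a, hco, hroot⟩ := exists_pairwise_isCoprime_isRoot_of_algEquiv_pi φ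
    exact ⟨a, eq_prod_X_sub_C_of_isRoot hP (Fintype.card_fin _).symm hco hroot, fun i j ↦ @hco i j⟩
  tfae_finish

theorem stmt_7 {k : Type*} [CommRing k] [Nontrivial k] (P : Polynomial k) (hP : P.Monic) :
    List.TFAE
      [ Nonempty ((Polynomial k ⧸ Ideal.span {P}) ≃ₐ[k] (Fin P.natDegree → k)),
        ∃ a : Fin P.natDegree → k,
          P = ∏ i, (Polynomial.X - Polynomial.C (a i)) ∧
          ∀ i j, i ≠ j →
            IsCoprime (Polynomial.X - Polynomial.C (a i)) (Polynomial.X - Polynomial.C (a j)),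
        (∃ a : Fin P.natDegree → k, P = ∏ i, (Polynomial.X - Polynomial.C (a i))) ∧
          IsCoprime P (Polynomial.derivative P) ] :=
  stmt_7_general P hP
end

section
/- Let S and T be monic polynomials in k[X] over a nonzero commutative ring k. If the k-algebra k[X]/(ST) is isomorphic to a finite power k^n of k, then the k-algebra k[X]/(S) is isomorphic to k^deg(S). -/
/-!
Let `φ : k[X]/(ST) ≃ₐ[k] kⁿ` and let `aᵢ` be the coordinates of `φ X`. Surjectivity of `φ` makes
every `aᵢ - aⱼ` (`i ≠ j`) a unit, and injectivity gives `ST = ∏ (X - aᵢ)`; in particular `ST`,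
hence `S`, is separable.

`S` has a root in `k`: from `xS + yT = 1` we get idempotents `eᵢ = x(aᵢ) S(aᵢ)` of `k` cutting out
the locus where `S(aᵢ)` is invertible, and `∏ eᵢ = 0` since it kills every `T(aᵢ)`, so that
`ST ∣ (∏ eᵢ) T` and `S` divides a constant. The loci where `aᵢ` is the first root of `S` form
complete orthogonal idempotents `dᵢ`, and `b = ∑ dᵢ aᵢ` is a root of `S`. Splitting off `X - b`
repeatedly, `S = ∏ (X - bⱼ)` with the `X - bⱼ` pairwise coprime by separability, and the Chinese
remainder theorem gives `k[X]/(S) ≃ₐ[k] k^(deg S)`.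
-/

open Polynomial
open scoped Function nonZeroDivisors

section Idempotents

variable {R : Type*} [CommRing R]

theorem isIdempotentElem_mul_of_mul_eq_zero {s t x y : R} (hst : s * t = 0)
    (h : x * s + y * t = 1) : IsIdempotentElem (x * s) := by
  unfold IsIdempotentElem
  linear_combination (x * s) * h - x * y * hst

/-- The family is `dᵢ = fᵢ ∏_{j < i} (1 - fⱼ)`. -/
theorem exists_orthogonalIdempotents_sum_eq_one_sub_prod :
    ∀ {n : ℕ} (f : Fin n → R), (∀ i, IsIdempotentElem (f i)) →
      ∃ d : Fin n → R, OrthogonalIdempotents d ∧ (∀ i, d i * f i = d i) ∧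
        ∑ i, d i = 1 - ∏ i, (1 - f i)
  | 0, _, _ => ⟨finZeroElim, ⟨finZeroElim, fun i => i.elim0⟩, finZeroElim, by simp⟩
  | n + 1, f, hf => by
    obtain ⟨d, hd, hdf, hsum⟩ :=
      exists_orthogonalIdempotents_sum_eq_one_sub_prod (fun i => f i.succ) fun i => hf i.succ
    have hf0 : f 0 * f 0 = f 0 := hf 0
    refine ⟨Fin.cons (f 0) fun i => (1 - f 0) * d i, ⟨fun i => ?_, fun i j hij => ?_⟩,
      fun i => ?_, ?_⟩
    · cases i using Fin.cases with
      | zero => exact hf 0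
      | succ i =>
        have hdi : d i * d i = d i := hd.idem i
        simp only [IsIdempotentElem, Fin.cons_succ]
        linear_combination (1 - f 0) * hdi + d i * d i * hf0
    · cases i using Fin.cases <;> cases j using Fin.cases
      · exact absurd rfl hij
      · simp only [Fin.cons_zero, Fin.cons_succ]; linear_combination (-d _) * hf0
      · simp only [Fin.cons_zero, Fin.cons_succ]; linear_combination (-d _) * hf0
      · simp only [Fin.cons_succ]
        linear_combination (1 - f 0) ^ 2 * hd.ortho (fun h => hij (congrArg Fin.succ h))
    · cases i using Fin.cases with
      | zero => exact hf 0
      | succ i =>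
        simp only [Fin.cons_succ]
        linear_combination (1 - f 0) * hdf i
    · rw [Fin.sum_univ_succ, Fin.prod_univ_succ]
      simp only [Fin.cons_zero, Fin.cons_succ, ← Finset.mul_sum, hsum]
      ring

end Idempotents

section PiAlgHom

variable {k : Type*} [CommRing k] {ι : Type*} [Fintype ι]

noncomputable def CompleteOrthogonalIdempotents.piAlgHom {d : ι → k}
    (hd : CompleteOrthogonalIdempotents d) : (ι → k) →ₐ[k] k where
  toFun x := ∑ i, d i * x i
  map_one' := by simpa using hd.complete
  map_mul' x y := by
    classical
    simp only [Pi.mul_apply, Finset.sum_mul_sum, mul_mul_mul_comm, hd.mul_eq, ite_mul, zero_mul,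
      Finset.sum_ite_eq, Finset.mem_univ, if_true]
  map_zero' := by simp
  map_add' x y := by simp [mul_add, Finset.sum_add_distrib]
  commutes' r := by simp [← Finset.sum_mul, hd.complete]

theorem CompleteOrthogonalIdempotents.piAlgHom_apply {d : ι → k}
    (hd : CompleteOrthogonalIdempotents d) (x : ι → k) : hd.piAlgHom x = ∑ i, d i * x i :=
  rfl

theorem exists_algHom_pi_apply_eq_one (f : ι → k) (hf : ∀ i, IsIdempotentElem (f i))
    (hprod : ∏ i, (1 - f i) = 0) : ∃ ψ : (ι → k) →ₐ[k] k, ψ f = 1 := by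
  let e := Fintype.equivFin ι
  obtain ⟨d, hd, hdf, hsum⟩ :=
    exists_orthogonalIdempotents_sum_eq_one_sub_prod (f ∘ e.symm) fun i => hf _
  have hsum' : ∑ i, d (e i) = 1 := by
    rw [e.sum_comp d, hsum, Function.comp_def, e.symm.prod_comp fun i => 1 - f i, hprod, sub_zero]
  have hcomplete : CompleteOrthogonalIdempotents (d ∘ e) :=
    ⟨(OrthogonalIdempotents.equiv e).mpr hd, hsum'⟩
  refine ⟨hcomplete.piAlgHom, ?_⟩
  rw [hcomplete.piAlgHom_apply, ← hsum']
  exact Finset.sum_congr rfl fun i _ => by simpa using hdf (e i)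

end PiAlgHom

namespace Polynomial

variable {k : Type*} [CommRing k] {ι : Type*}

theorem aeval_pi_apply_eq_eval (a : ι → k) (P : k[X]) (i : ι) : aeval a P i = P.eval (a i) := by
  rw [aeval_pi_apply₂, coe_aeval_eq_eval]

variable [Fintype ι]

theorem prod_X_sub_C_dvd_of_forall_isRoot {a : ι → k}
    (ha : Pairwise fun i j => IsUnit (a i - a j)) {P : k[X]} (hP : ∀ i, P.IsRoot (a i)) :
    ∏ i, (X - C (a i)) ∣ P :=
  Finset.prod_dvd_of_coprime (fun _ _ _ _ hij => isCoprime_X_sub_C_of_isUnit_sub (ha hij))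
    fun i _ => dvd_iff_isRoot.mpr (hP i)

theorem separable_prod_X_sub_C_of_isUnit_sub {a : ι → k}
    (ha : Pairwise fun i j => IsUnit (a i - a j)) : (∏ i, (X - C (a i))).Separable :=
  separable_prod (fun _ _ hij => isCoprime_X_sub_C_of_isUnit_sub (ha hij)) fun _ =>
    separable_X_sub_C

theorem Separable.pairwise_isCoprime {f : ι → k[X]} (h : (∏ i, f i).Separable) :
    Pairwise (IsCoprime on f) := by
  classical
  intro i j hij
  rw [← Finset.mul_prod_erase _ _ (Finset.mem_univ i),
    ← Finset.mul_prod_erase _ _ (Finset.mem_erase.mpr ⟨hij.symm, Finset.mem_univ j⟩)] at h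
  exact h.isCoprime.of_mul_right_left

theorem Monic.eq_zero_of_dvd_C {S : k[X]} (hS : S.Monic) (hdeg : 0 < S.natDegree) {c : k}
    (h : S ∣ C c) : c = 0 := by
  by_contra hc
  exact hS.not_dvd_of_natDegree_lt (C_ne_zero.mpr hc) (by rwa [natDegree_C]) h

theorem eq_zero_of_forall_mul_eval_eq_zero {a : ι → k}
    (ha : Pairwise fun i j => IsUnit (a i - a j)) {S T : k[X]} (hS : S.Monic)
    (hdeg : 0 < S.natDegree) (hST : ∏ i, (X - C (a i)) = S * T) {c : k}
    (hc : ∀ i, c * T.eval (a i) = 0) : c = 0 := by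
  have hT : T ∈ k[X]⁰ := (mul_mem_nonZeroDivisors.mp
    (hST ▸ monic_prod_of_monic _ _ fun i _ => monic_X_sub_C (a i)).mem_nonZeroDivisors).2
  refine hS.eq_zero_of_dvd_C hdeg ((dvd_cancel_right_mem_nonZeroDivisors hT).mp ?_)
  exact hST ▸ prod_X_sub_C_dvd_of_forall_isRoot ha fun i => by simp [hc i]

theorem exists_isRoot_of_dvd_prod_X_sub_C {a : ι → k}
    (ha : Pairwise fun i j => IsUnit (a i - a j)) {S : k[X]} (hS : S.Monic)
    (hdeg : 0 < S.natDegree) (hdvd : S ∣ ∏ i, (X - C (a i))) : ∃ b, S.IsRoot b := by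
  obtain ⟨T, hST⟩ := hdvd
  obtain ⟨x, y, hxy⟩ := (hST ▸ separable_prod_X_sub_C_of_isUnit_sub ha).isCoprime
  have hst : aeval a S * aeval a T = 0 := by
    ext i
    rw [← map_mul, ← hST, aeval_pi_apply_eq_eval, eval_prod]
    exact Finset.prod_eq_zero (Finset.mem_univ i) (by simp)
  have hcomax : aeval a x * aeval a S + aeval a y * aeval a T = 1 := by
    simpa using congrArg (aeval a) hxy
  set e := aeval a x * aeval a S
  have he : IsIdempotentElem e := isIdempotentElem_mul_of_mul_eq_zero hst hcomax
  have hes : e * aeval a S = aeval a S := by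
    linear_combination aeval a S * hcomax - aeval a y * hst
  have het : e * aeval a T = 0 := by linear_combination aeval a x * hst
  have hprod : ∏ i, e i = 0 := eq_zero_of_forall_mul_eval_eq_zero ha hS hdeg hST fun i => by
    obtain ⟨r, hr⟩ := Finset.dvd_prod_of_mem e (Finset.mem_univ i)
    rw [hr, mul_right_comm, ← aeval_pi_apply_eq_eval, ← Pi.mul_apply, het, Pi.zero_apply,
      zero_mul]
  obtain ⟨ψ, hψ⟩ := exists_algHom_pi_apply_eq_one (1 - e) (fun i => congrFun he.one_sub i)
    (by simpa using hprod)
  rw [map_sub, map_one, sub_eq_self] at hψ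
  refine ⟨ψ a, ?_⟩
  rw [IsRoot, ← coe_aeval_eq_eval, aeval_algHom_apply, ← hes, map_mul, hψ, zero_mul]

theorem exists_eq_prod_X_sub_C_of_dvd_prod_X_sub_C [Nontrivial k] {a : ι → k}
    (ha : Pairwise fun i j => IsUnit (a i - a j)) {S : k[X]} (hS : S.Monic)
    (hdvd : S ∣ ∏ i, (X - C (a i))) : ∃ b : Fin S.natDegree → k, S = ∏ j, (X - C (b j)) := by
  induction hd : S.natDegree generalizing S with
  | zero => exact ⟨finZeroElim, by simpa using hS.natDegree_eq_zero.mp hd⟩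
  | succ d ih =>
    obtain ⟨b₀, hb₀⟩ := exists_isRoot_of_dvd_prod_X_sub_C ha hS (by omega) hdvd
    obtain ⟨S₁, rfl⟩ := dvd_iff_isRoot.mpr hb₀
    have hS₁ : S₁.Monic := (monic_X_sub_C b₀).of_mul_monic_left hS
    rw [(monic_X_sub_C b₀).natDegree_mul hS₁, natDegree_X_sub_C, add_comm] at hd
    obtain ⟨b, hb⟩ := ih hS₁ (dvd_of_mul_left_dvd hdvd) (Nat.succ_injective hd)
    exact ⟨Fin.cons b₀ b, by rw [Fin.prod_univ_succ, hb]; simp⟩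

noncomputable def quotientSpanProdXSubCAlgEquiv (b : ι → k)
    (hb : Pairwise (IsCoprime on fun i => X - C (b i))) :
    (k[X] ⧸ Ideal.span {∏ i, (X - C (b i))}) ≃ₐ[k] (ι → k) :=
  (Ideal.quotientEquivAlgOfEq k (Ideal.iInf_span_singleton fun _ _ hij => hb hij)).symm.trans <|
    (AlgEquiv.ofRingEquiv (f := Ideal.quotientInfRingEquivPiQuotient _
      fun _ _ hij => (Ideal.isCoprime_span_singleton_iff _ _).mpr (hb hij)) fun _ => rfl).trans <|
    AlgEquiv.piCongrRight fun i => quotientSpanXSubCAlgEquiv (b i)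

theorem exists_eq_prod_X_sub_C_of_algEquiv_pi [Nontrivial k] [DecidableEq ι] {F : k[X]}
    (hF : F.Monic) (φ : (k[X] ⧸ Ideal.span {F}) ≃ₐ[k] (ι → k)) :
    ∃ a : ι → k, (Pairwise fun i j => IsUnit (a i - a j)) ∧ F = ∏ i, (X - C (a i)) := by
  set a := φ (Ideal.Quotient.mk _ X)
  have hφ : ∀ P i, φ (Ideal.Quotient.mk _ P) i = P.eval (a i) := fun P i => by
    rw [← aeval_pi_apply_eq_eval]
    simpa using
      congrFun (aeval_algHom_apply (φ.toAlgHom.comp (Ideal.Quotient.mkₐ k _)) X P).symm i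
  have ha : Pairwise fun i j => IsUnit (a i - a j) := fun i j hij => by
    obtain ⟨q, hq⟩ := φ.surjective (Pi.single i 1)
    obtain ⟨P, rfl⟩ := Ideal.Quotient.mk_surjective q
    have := sub_dvd_eval_sub (a i) (a j) P
    rw [← hφ, ← hφ, hq, Pi.single_eq_same, Pi.single_eq_of_ne hij.symm, sub_zero] at this
    exact isUnit_of_dvd_one this
  refine ⟨a, ha, ?_⟩
  have hprod_dvd : ∏ i, (X - C (a i)) ∣ F := prod_X_sub_C_dvd_of_forall_isRoot ha fun i => by
    rw [IsRoot, ← hφ, Ideal.Quotient.eq_zero_iff_mem.mpr (Ideal.mem_span_singleton_self F),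
      map_zero, Pi.zero_apply]
  have hdvd_prod : F ∣ ∏ i, (X - C (a i)) := by
    rw [← Ideal.mem_span_singleton, ← Ideal.Quotient.eq_zero_iff_mem]
    refine φ.injective ?_
    rw [map_zero]
    funext i
    rw [hφ, Pi.zero_apply, eval_prod]
    exact Finset.prod_eq_zero (Finset.mem_univ i) (by simp)
  have hmonic : (∏ i, (X - C (a i))).Monic := monic_prod_of_monic _ _ fun i _ => monic_X_sub_C _
  exact eq_of_monic_of_dvd_of_natDegree_le hmonic hF hprod_dvd
    (le_of_not_gt fun hlt => hF.not_dvd_of_natDegree_lt hmonic.ne_zero hlt hdvd_prod)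

end Polynomial

theorem stmt_8 {k : Type*} [CommRing k] [Nontrivial k] (S T : Polynomial k)
    (hS : S.Monic) (hT : T.Monic)
    (h : ∃ n : ℕ, Nonempty ((Polynomial k ⧸ Ideal.span {S * T}) ≃ₐ[k] (Fin n → k))) :
    Nonempty ((Polynomial k ⧸ Ideal.span {S}) ≃ₐ[k] (Fin S.natDegree → k)) := by
  obtain ⟨n, ⟨φ⟩⟩ := h
  obtain ⟨a, ha, hST⟩ := exists_eq_prod_X_sub_C_of_algEquiv_pi (hS.mul hT) φ
  have hdvd : S ∣ ∏ i, (X - C (a i)) := hST ▸ dvd_mul_right S T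
  obtain ⟨b, hb⟩ := exists_eq_prod_X_sub_C_of_dvd_prod_X_sub_C ha hS hdvd
  have hsep : (∏ j, (X - C (b j))).Separable :=
    hb ▸ (separable_prod_X_sub_C_of_isUnit_sub ha).of_dvd hdvd
  exact ⟨(Ideal.quotientEquivAlgOfEq k (by rw [← hb])).trans
    (quotientSpanProdXSubCAlgEquiv b hsep.pairwise_isCoprime)⟩
end

section
/- Let d > 1 be an integer and α ∈ k an element of a commutative ring k. Suppose d is invertible in k and α is a root of the d-th cyclotomic polynomial Φ_d (with integer coefficients, viewed in k[X]). Then α − 1 is a unit of k. -/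
theorem stmt_9 {k : Type*} [CommRing k] (d : ℕ) (hd : 1 < d) (hdk : IsUnit (d : k)) (α : k)
    (hα : (Polynomial.cyclotomic d k).eval α = 0) : IsUnit (α - 1) := by
  have hdvd := Polynomial.cyclotomic_dvd_geom_sum_of_dvd k (dvd_refl d) (by omega)
  obtain ⟨g, hg⟩ := hdvd
  have hsum : (∑ i ∈ Finset.range d, α ^ i) = 0 := by
    have := congrArg (Polynomial.eval α) hg
    simpa [hα] using this
  have hdivd : (α - 1) ∣ (d : k) := by
    have : (d : k) = ∑ i ∈ Finset.range d, (1 - α ^ i) := by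
      rw [Finset.sum_sub_distrib, hsum, sub_zero, Finset.sum_const,
        Finset.card_range, nsmul_eq_mul, mul_one]
    rw [this]
    exact Finset.dvd_sum fun i _ => by
      simpa [neg_sub] using dvd_neg.mpr (sub_dvd_pow_sub_pow α 1 i)
  exact isUnit_of_dvd_unit hdivd hdk
end

section
/- Let k be a nonzero commutative ring and V a group such that the group algebra k[V] is isomorphic as a k-algebra to a product k^E of copies of k indexed by some set E. Then V is commutative and finite. -/
/-!
A k-algebra isomorphism `φ : k[V] ≃ₐ[k] k^E` makes `k[V]` commutative, hence `V` abelian.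
For finiteness, pick `e ∈ E` (there is one, as `k[V] ≠ 0`): the element `x = φ⁻¹(δ_e)`
satisfies `g · x = φ(g)(e) • x` for every `g ∈ V`, so the support of `x` is a nonempty finite
subset of `V` stable under left translation, and `g ↦ g s` embeds `V` into it.
-/

namespace MonoidAlgebra

variable {k G : Type*}

lemma mul_comm_of_mul_comm [Semiring k] [Nontrivial k] [MulOneClass G]
    (h : ∀ x y : MonoidAlgebra k G, x * y = y * x) (a b : G) : a * b = b * a :=
  of_injective (R := k) <| by rw [map_mul, map_mul, h]

lemma mul_mem_support_of_single_mul_eq_smul [Semiring k] [Group G] {x : MonoidAlgebra k G}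
    {g s : G} {c : k} (hgx : single g 1 * x = c • x) (hs : s ∈ x.coeff.support) :
    g * s ∈ x.coeff.support := by
  have hcoeff : x.coeff s = c • x.coeff (g * s) := by
    rw [← coeff_smul_apply, ← hgx, coeff_single_mul_apply, inv_mul_cancel_left, one_mul]
  rw [Finsupp.mem_support_iff] at hs ⊢
  intro hzero
  exact hs (by rw [hcoeff, hzero, smul_zero])

lemma finite_of_single_mul_eq_smul [Semiring k] [Group G] {x : MonoidAlgebra k G} (hx : x ≠ 0)
    (h : ∀ g : G, ∃ c : k, single g 1 * x = c • x) : Finite G := by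
  obtain ⟨s, hs⟩ := Finsupp.support_nonempty_iff.mpr (mt coeff_eq_zero.mp hx)
  refine Finite.of_injective
    (fun g : G ↦ (⟨g * s, mul_mem_support_of_single_mul_eq_smul (h g).choose_spec hs⟩ :
      x.coeff.support)) fun a b hab ↦ mul_right_cancel (congrArg Subtype.val hab)

end MonoidAlgebra

lemma Pi.mul_single_one {E k : Type*} [DecidableEq E] [Semiring k] (f : E → k) (e : E) :
    f * Pi.single e 1 = f e • Pi.single e 1 := by
  rw [← Pi.single_mul_right, mul_one, ← Pi.single_smul', smul_eq_mul, mul_one]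

theorem stmt_11 {k : Type} [CommRing k] [Nontrivial k] {V : Type} [Group V]
    (h : ∃ E : Type, Nonempty (MonoidAlgebra k V ≃ₐ[k] (E → k))) :
    (∀ a b : V, a * b = b * a) ∧ Finite V := by
  classical
  obtain ⟨E, ⟨φ⟩⟩ := h
  have hcomm (x y : MonoidAlgebra k V) : x * y = y * x :=
    φ.injective <| by rw [map_mul, map_mul, mul_comm]
  refine ⟨MonoidAlgebra.mul_comm_of_mul_comm hcomm, ?_⟩
  obtain ⟨e⟩ : Nonempty E := by
    refine (isEmpty_or_nonempty E).resolve_left fun hE ↦ one_ne_zero (φ.injective ?_)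
    exact Subsingleton.elim _ _
  refine MonoidAlgebra.finite_of_single_mul_eq_smul (x := φ.symm (Pi.single e 1))
    (by simp) fun g ↦ ⟨φ (MonoidAlgebra.single g 1) e, φ.injective ?_⟩
  rw [map_mul, map_smul, φ.apply_symm_apply, Pi.mul_single_one]
end

section
/- Let p be a prime, r > 1, and N = p^r. Let k be a subring of ℂ containing all roots of unity. Let χ : (ℤ/N)^× → k^× be an imprimitive character (one factoring through (ℤ/p^{r−1})^×) and τ : ℤ/N → k^× a non-injective group homomorphism. Denote by χ̄ : (ℤ/p^{r−1})^× → k^× and τ̄ : ℤ/p^{r−1} → k^× the induced homomorphisms. Then the Gauss sum satisfies G_{p^r}(χ, τ) = p · G_{p^{r−1}}(χ̄, τ̄). -/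
/-!
Reduction mod `p ^ (r - 1)` is a surjective homomorphism `(ℤ/p^r)ˣ → (ℤ/p^(r-1))ˣ`, and the
summand `χ(t) τ(t)` depends only on the reduction of `t`, so each term of the sum over
`(ℤ/p^(r-1))ˣ` is repeated once for every element of the kernel. Since `r > 1`, `φ(p^r) = p · φ(p^(r-1))`, so the kernel has `p` elements.
-/

open Finset

theorem MonoidHom.sum_comp_of_surjective {G H M : Type*} [Group G] [Group H] [Fintype G]
    [Fintype H] [AddCommMonoid M] (g : G →* H) (hg : Function.Surjective g) (f : H → M) :
    ∑ t, f (g t) = Nat.card g.ker • ∑ u, f u := by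
  classical
  have hfiber (u : H) : #{t | g t = u} = Nat.card g.ker := by
    rw [MonoidHom.card_fiber_eq_of_mem_range g (hg u) (hg 1), Nat.card_eq_fintype_card,
      Fintype.card_subtype]
    simp only [MonoidHom.mem_ker]
  rw [sum_comp, image_univ_of_surjective hg, smul_sum]
  simp only [hfiber]

theorem MonoidHom.card_ker_mul_card_of_surjective {G H : Type*} [Group G] [Group H]
    (g : G →* H) (hg : Function.Surjective g) :
    Nat.card g.ker * Nat.card H = Nat.card G := by
  rw [← Subgroup.card_top (G := H), ← MonoidHom.range_eq_top.mpr hg, ← Subgroup.index_ker,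
    Subgroup.card_mul_index]

theorem ZMod.card_ker_unitsMap_mul_totient {m n : ℕ} [NeZero m] (h : n ∣ m) :
    Nat.card (ZMod.unitsMap h).ker * n.totient = m.totient := by
  have : NeZero n := ⟨fun hn => NeZero.ne m (Nat.eq_zero_of_zero_dvd (hn ▸ h))⟩
  rw [← ZMod.card_units_eq_totient, ← ZMod.card_units_eq_totient, ← Nat.card_eq_fintype_card,
    ← Nat.card_eq_fintype_card]
  exact (ZMod.unitsMap h).card_ker_mul_card_of_surjective (ZMod.unitsMap_surjective h)

theorem ZMod.card_ker_unitsMap_prime_pow {p r : ℕ} (hp : p.Prime) (hr : 1 < r)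
    [NeZero (p ^ r)] (h : p ^ (r - 1) ∣ p ^ r) :
    Nat.card (ZMod.unitsMap h).ker = p := by
  have htot : (p ^ r).totient = p * (p ^ (r - 1)).totient := by
    rw [← Nat.totient_mul_of_prime_of_dvd hp (dvd_pow_self p (by omega)), ← pow_succ',
      Nat.sub_add_cancel hr.le]
  have hpos : 0 < (p ^ (r - 1)).totient := Nat.totient_pos.mpr (pow_pos hp.pos _)
  exact Nat.eq_of_mul_eq_mul_right hpos ((ZMod.card_ker_unitsMap_mul_totient h).trans htot)

theorem stmt_14_general (p r : ℕ) (hp : p.Prime) (hr : 1 < r)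
    [NeZero (p ^ r)] [NeZero (p ^ (r - 1))]
    (K : Subring ℂ)
    (χ : (ZMod (p ^ r))ˣ →* (↥K)ˣ) (χ' : (ZMod (p ^ (r - 1)))ˣ →* (↥K)ˣ)
    (hχ : ∀ t : (ZMod (p ^ r))ˣ, χ t =
      χ' (Units.map (ZMod.castHom (pow_dvd_pow p (Nat.sub_le r 1))
            (ZMod (p ^ (r - 1)))).toMonoidHom t))
    (τ : ZMod (p ^ r) → (↥K)ˣ)
    (τ' : ZMod (p ^ (r - 1)) → (↥K)ˣ)
    (hτ : ∀ t : ZMod (p ^ r), τ t =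
      τ' (ZMod.castHom (pow_dvd_pow p (Nat.sub_le r 1)) (ZMod (p ^ (r - 1))) t)) :
    ∑ t : (ZMod (p ^ r))ˣ, ((χ t : (↥K)ˣ) : ↥K) * ((τ (t : ZMod (p ^ r)) : (↥K)ˣ) : ↥K)
      = (p : ↥K) *
        ∑ t : (ZMod (p ^ (r - 1)))ˣ,
          ((χ' t : (↥K)ˣ) : ↥K) * ((τ' (t : ZMod (p ^ (r - 1))) : (↥K)ˣ) : ↥K) := by
  have h := pow_dvd_pow p (Nat.sub_le r 1)
  have hsum := (ZMod.unitsMap h).sum_comp_of_surjective (ZMod.unitsMap_surjective h)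
    fun u => ((χ' u : (↥K)ˣ) : ↥K) * ((τ' (u : ZMod (p ^ (r - 1))) : (↥K)ˣ) : ↥K)
  rw [ZMod.card_ker_unitsMap_prime_pow hp hr, nsmul_eq_mul] at hsum
  rw [← hsum]
  exact sum_congr rfl fun t _ => by rw [hχ t, hτ]; rfl

theorem stmt_14 (p r : ℕ) (hp : p.Prime) (hr : 1 < r)
    [NeZero (p ^ r)] [NeZero (p ^ (r - 1))]
    (K : Subring ℂ) (hK : ∀ z : ℂ, (∃ n : ℕ, 0 < n ∧ z ^ n = 1) → z ∈ K)
    (χ : (ZMod (p ^ r))ˣ →* (↥K)ˣ) (χ' : (ZMod (p ^ (r - 1)))ˣ →* (↥K)ˣ)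
    (hχ : ∀ t : (ZMod (p ^ r))ˣ, χ t =
      χ' (Units.map (ZMod.castHom (pow_dvd_pow p (Nat.sub_le r 1))
            (ZMod (p ^ (r - 1)))).toMonoidHom t))
    (τ : ZMod (p ^ r) → (↥K)ˣ) (hτ0 : τ 0 = 1) (hτadd : ∀ a b, τ (a + b) = τ a * τ b)
    (hτni : ¬ Function.Injective τ)
    (τ' : ZMod (p ^ (r - 1)) → (↥K)ˣ)
    (hτ : ∀ t : ZMod (p ^ r), τ t =
      τ' (ZMod.castHom (pow_dvd_pow p (Nat.sub_le r 1)) (ZMod (p ^ (r - 1))) t)) :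
    ∑ t : (ZMod (p ^ r))ˣ, ((χ t : (↥K)ˣ) : ↥K) * ((τ (t : ZMod (p ^ r)) : (↥K)ˣ) : ↥K)
      = (p : ↥K) *
        ∑ t : (ZMod (p ^ (r - 1)))ˣ,
          ((χ' t : (↥K)ˣ) : ↥K) * ((τ' (t : ZMod (p ^ (r - 1))) : (↥K)ˣ) : ↥K) :=
  stmt_14_general p r hp hr K χ χ' hχ τ τ' hτ
end

section
/- Let k be a subring of ℂ containing all roots of unity and G a finite abelian group. An element Σ_{g∈G} c_g [g] of the group algebra k[G] is a unit if and only if for every group homomorphism χ : G → k^×, the element Σ_{g∈G} c_g χ(g) of k is a unit. -/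
/-!
Multiplication by `x` on `K[G]` has matrix `(x (g * h⁻¹))_{g,h}` in the basis `G`, so the norm
of `x` is the determinant of this matrix. Over `ℂ` the characters `G →* ℂˣ` form a basis of
`G → ℂ` of eigenvectors of it, the eigenvalue at `ψ` being `∑ g, x g * ψ⁻¹ g`; hence the norm
of `x` is the product of the character sums `∑ g, x g * ψ g`. Characters take values in roots
of unity, so they lift to `K`-valued characters and every factor is a unit of `K`; an element
of a finite free algebra whose norm is a unit is itself a unit. Conversely, evaluating at a
character is a ring homomorphism `K[G] → K`.
-/

theorem Algebra.isUnit_of_isUnit_norm {R S : Type*} [CommRing R] [Ring S] [Algebra R S]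
    [Module.Finite R S] [Module.Free R S] {x : S} (h : IsUnit (Algebra.norm R x)) : IsUnit x :=
  Algebra.lmul_isUnit_iff.mp ((LinearMap.isUnit_iff_isUnit_det _).mpr h)

theorem LinearMap.det_eq_prod_of_apply_basis {R M ι : Type*} [CommRing R] [AddCommGroup M]
    [Module R M] [Fintype ι] [DecidableEq ι] (b : Module.Basis ι R M) (f : M →ₗ[R] M)
    (μ : ι → R) (hf : ∀ i, f (b i) = μ i • b i) : LinearMap.det f = ∏ i, μ i := by
  have : LinearMap.toMatrix b b f = Matrix.diagonal μ := by
    ext i j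
    rw [LinearMap.toMatrix_apply, hf, map_smul, b.repr_self, Finsupp.smul_apply,
      Finsupp.single_apply, Matrix.diagonal_apply]
    split_ifs <;> simp_all [eq_comm]
  rw [← LinearMap.det_toMatrix b, this, Matrix.det_diagonal]

theorem MonoidAlgebra.leftMulMatrix_basis {R G : Type*} [CommRing R] [Group G] [Fintype G]
    [DecidableEq G] (x : MonoidAlgebra R G) :
    Algebra.leftMulMatrix (MonoidAlgebra.basis G R) x =
      Matrix.of fun g h => x.coeff (g * h⁻¹) := by
  ext g h
  rw [Algebra.leftMulMatrix_eq_repr_mul, MonoidAlgebra.basis_apply]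
  exact (MonoidAlgebra.coeff_mul_single_apply ..).trans (mul_one _)

theorem linearIndependent_units_monoidHom (G F : Type*) [Monoid G] [CommRing F] [IsDomain F] :
    LinearIndependent F fun (ψ : G →* Fˣ) (g : G) => (ψ g : F) :=
  (linearIndependent_monoidHom G F).comp (fun ψ => (Units.coeHom F).comp ψ)
    fun _ _ h => MonoidHom.ext fun g => Units.ext (DFunLike.congr_fun h g)

section Characters

variable (G F : Type*) [CommGroup G] [Fintype G] [Field F]
  [HasEnoughRootsOfUnity F (Monoid.exponent G)] [Fintype (G →* Fˣ)]

noncomputable def characterBasis : Module.Basis (G →* Fˣ) F (G → F) :=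
  basisOfLinearIndependentOfCardEqFinrank (linearIndependent_units_monoidHom G F) <| by
    rw [Module.finrank_fintype_fun_eq_card, Fintype.card_eq_nat_card, Fintype.card_eq_nat_card,
      CommGroup.card_monoidHom_of_hasEnoughRootsOfUnity]

theorem characterBasis_apply (ψ : G →* Fˣ) : characterBasis G F ψ = fun g => (ψ g : F) :=
  congrFun (coe_basisOfLinearIndependentOfCardEqFinrank _ _) ψ

variable {G F} [DecidableEq G]

theorem Matrix.det_of_mul_inv (c : G → F) :
    (Matrix.of fun g h : G => c (g * h⁻¹)).det = ∏ ψ : G →* Fˣ, ∑ u, c u * ψ u := by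
  classical
  rw [← Equiv.prod_comp (Equiv.inv (G →* Fˣ)), ← LinearMap.det_toLin',
    LinearMap.det_eq_prod_of_apply_basis (characterBasis G F) _ _ fun ψ => ?_]
  ext g
  simp only [characterBasis_apply, Matrix.toLin'_apply, Matrix.mulVec, dotProduct,
    Matrix.of_apply, Pi.smul_apply, smul_eq_mul, Finset.sum_mul]
  refine Fintype.sum_equiv ((Equiv.inv G).trans (Equiv.mulLeft g)) _ _ fun h => ?_
  simp only [Equiv.trans_apply, Equiv.inv_apply, Equiv.coe_mulLeft, MonoidHom.inv_apply]
  rw [mul_assoc, ← Units.val_mul, ← map_inv, ← map_mul,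
    show (g * h⁻¹)⁻¹ * g = h by group]

end Characters

theorem Subring.exists_units_lift_of_forall_rootOfUnity_mem {R G : Type*} [CommRing R] [Group G]
    [Finite G] {K : Subring R} (hK : ∀ z : R, (∃ n : ℕ, 0 < n ∧ z ^ n = 1) → z ∈ K)
    (ψ : G →* Rˣ) :
    ∃ χ : G →* Kˣ, ∀ g, ((χ g : K) : R) = ψ g := by
  have hmem (g : G) : ((Units.coeHom R).comp ψ) g ∈ K := by
    refine hK _ ⟨Nat.card G, Nat.card_pos, ?_⟩
    rw [← map_pow, pow_card_eq_one', map_one]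
  exact ⟨(((Units.coeHom R).comp ψ).codRestrict K hmem).toHomUnits, fun g => rfl⟩

theorem stmt_16 (K : Subring ℂ) (hK : ∀ z : ℂ, (∃ n : ℕ, 0 < n ∧ z ^ n = 1) → z ∈ K)
    {G : Type*} [CommGroup G] [Fintype G] (x : MonoidAlgebra (↥K) G) :
    IsUnit x ↔ ∀ χ : G →* (↥K)ˣ, IsUnit (∑ g : G, x.coeff g * ((χ g : (↥K)ˣ) : ↥K)) := by
  classical
  constructor
  · intro hx χ
    have hlift : MonoidAlgebra.lift K K G ((Units.coeHom K).comp χ) x =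
        ∑ g : G, x.coeff g * ((χ g : Kˣ) : K) := by
      rw [MonoidAlgebra.lift_apply, Finsupp.sum_fintype _ _ fun g => by simp]
      rfl
    exact hlift ▸ hx.map _
  · intro h
    have : Fintype (G →* ℂˣ) := Fintype.ofFinite _
    choose χ hχ using K.exists_units_lift_of_forall_rootOfUnity_mem hK (G := G)
    have hnorm : Algebra.norm K x = ∏ ψ, ∑ g, x.coeff g * ((χ ψ g : Kˣ) : K) := by
      apply Subtype.val_injective
      change K.subtype _ = K.subtype _
      rw [Algebra.norm_eq_matrix_det (MonoidAlgebra.basis G K), RingHom.map_det,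
        MonoidAlgebra.leftMulMatrix_basis]
      simp only [RingHom.mapMatrix_apply, map_prod, map_sum, map_mul, Subring.coe_subtype, hχ]
      exact Matrix.det_of_mul_inv fun u => (x.coeff u : ℂ)
    exact Algebra.isUnit_of_isUnit_norm (hnorm ▸ IsUnit.prod_univ_iff.mpr fun ψ => h (χ ψ))
end

section
/- Let k be a nonzero commutative ring and V an abelian group. If an element e = Σ_{u∈V} λ(u)[u] of the group algebra k[V] is a nonzero idempotent such that for every v ∈ V there exists φ(v) ∈ k with [v]·e = φ(v)·e, then λ(u) ≠ 0 for all u ∈ V; in particular, if such an e exists then V is finite. -/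
/-! Comparing coefficients at `u` in `[u - w] * e = φ • e` gives `λ(w) = φ * λ(u)`, so a vanishing
coefficient `λ(u)` forces every `λ(w)` to vanish, i.e. `e = 0`. -/

namespace AddMonoidAlgebra

variable {k G : Type*} [Semiring k]

theorem coeff_ne_zero_of_forall_single_mul_eq_smul [AddGroup G] {x : AddMonoidAlgebra k G}
    (hx : x ≠ 0) (h : ∀ v, ∃ c : k, single v 1 * x = c • x) (u : G) : x.coeff u ≠ 0 := by
  obtain ⟨w, hw⟩ : ∃ w, x.coeff w ≠ 0 := by
    by_contra! hzero
    exact hx (coeff_eq_zero.mp (Finsupp.ext hzero))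
  intro hu
  obtain ⟨c, hc⟩ := h (u - w)
  have hcoeff := congrArg (fun y : AddMonoidAlgebra k G ↦ y.coeff u) hc
  simp only [coeff_single_mul_apply, one_mul, neg_sub, sub_add_cancel, coeff_smul_apply, hu,
    smul_zero] at hcoeff
  exact hw hcoeff

theorem finite_of_forall_coeff_ne_zero {x : AddMonoidAlgebra k G} (hx : ∀ u, x.coeff u ≠ 0) :
    Finite G :=
  Set.finite_univ_iff.mp <| x.coeff.support.finite_toSet.subset fun u _ ↦ by simpa using hx u

end AddMonoidAlgebra

theorem stmt_17_general {k V : Type*} [CommRing k] [AddCommGroup V]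
    (x : AddMonoidAlgebra k V) (hx : x ≠ 0)
    (h : ∀ v : V, ∃ c : k, (AddMonoidAlgebra.single v 1 : AddMonoidAlgebra k V) * x = c • x) :
    (∀ u : V, x.coeff u ≠ 0) ∧ Finite V := by
  have hcoeff := AddMonoidAlgebra.coeff_ne_zero_of_forall_single_mul_eq_smul hx h
  exact ⟨hcoeff, AddMonoidAlgebra.finite_of_forall_coeff_ne_zero hcoeff⟩

theorem stmt_17 {k V : Type*} [CommRing k] [Nontrivial k] [AddCommGroup V]
    (x : AddMonoidAlgebra k V) (hidem : x * x = x) (hx : x ≠ 0)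
    (h : ∀ v : V, ∃ c : k, (AddMonoidAlgebra.single v 1 : AddMonoidAlgebra k V) * x = c • x) :
    (∀ u : V, x.coeff u ≠ 0) ∧ Finite V :=
  stmt_17_general x hx h
end

section
/- Let k be a nonzero commutative ring, V an abelian group, and (U_n)_{n∈ℕ} a decreasing sequence of subgroups of V. If the canonical k-linear map k[V] → lim_n k[V/U_n] is an isomorphism, then there exists n ∈ ℕ with U_n = 0. -/
/-!
If no `U n` is trivial, injectivity forces `⋂ U n = 0`, so one can pick `w j ∈ U j` that become
pairwise distinct and nonzero in `V ⧸ U n` for large `n`. The partial sums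
`∑_{j<n} ([w j] - [0])` form a compatible family whose level-`n` supports have unbounded size,
whereas the image of a fixed `x : k[V]` at every level has at most `|supp x|` points; so the family
has no preimage.
-/

open Finset Finsupp QuotientAddGroup

section

variable {k V : Type*} [AddCommGroup V]

theorem eq_zero_of_forall_mem_of_injective_mapDomain_mk [Semiring k] [Nontrivial k] {ι : Type*}
    (U : ι → AddSubgroup V)
    (hinj : Function.Injective (fun x : V →₀ k => fun i => mapDomain (mk' (U i)) x))
    {v : V} (hv : ∀ i, v ∈ U i) : v = 0 := by
  refine single_left_injective (one_ne_zero (α := k)) (hinj (funext fun i => ?_))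
  simp only [mapDomain_single, mk'_apply, (eq_zero_iff v).mpr (hv i), QuotientAddGroup.mk_zero]

/-- `w i` is distinct from `0` and from every later `w j` in each `V ⧸ U n` with `N i ≤ n`. -/
theorem exists_separated_seq {U : ℕ → AddSubgroup V} (hU : Antitone U) (hne : ∀ n, U n ≠ ⊥)
    (hI : ∀ v, (∀ n, v ∈ U n) → v = 0) :
    ∃ (w : ℕ → V) (N : ℕ → ℕ), StrictMono N ∧ (∀ n, w n ∈ U n) ∧ (∀ i, w i ∉ U (N i)) ∧
      ∀ i j, i < j → w j ∈ U (N i) := by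
  have hv : ∀ n, ∃ v ∈ U n, ∃ m, v ∉ U m := fun n => by
    obtain ⟨v, hvU, hv0⟩ := (U n).bot_or_exists_ne_zero.resolve_left (hne n)
    by_contra! h
    exact hv0 (hI v (h v hvU))
  choose v hvU M hM using hv
  -- `P (j + 1)` lies past `P j` and past the level `M (P j)` at which `v (P j)` drops out.
  set P : ℕ → ℕ := fun j => (fun n => max (n + 1) (M n))^[j] 0
  have hP_succ : ∀ j, P (j + 1) = max (P j + 1) (M (P j)) := fun j =>
    Function.iterate_succ_apply' _ _ _
  have hP : StrictMono P := strictMono_nat_of_lt_succ fun j => by rw [hP_succ]; omega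
  refine ⟨fun j => v (P j), fun j => P (j + 1), fun _ _ h => hP (Nat.succ_lt_succ h),
    fun n => hU (hP.id_le n) (hvU _),
    fun i hi => hM (P i) (hU ((le_max_right _ _).trans (hP_succ i).ge) hi),
    fun i j hij => hU (hP.monotone hij) (hvU _)⟩

theorem mapDomain_map_mapDomain_mk [AddCommMonoid k] {U U' : AddSubgroup V} (h : U ≤ U')
    (x : V →₀ k) :
    mapDomain (map U U' (AddMonoidHom.id V) fun _ hv => h hv) (mapDomain (mk' U) x) =
      mapDomain (mk' U') x := by
  rw [← mapDomain_comp]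
  rfl

variable (k) in
noncomputable def partialSum [Ring k] (w : ℕ → V) (n : ℕ) : V →₀ k :=
  ∑ j ∈ range n, (single (w j) 1 - single 0 1)

theorem mapDomain_mk_partialSum_succ [Ring k] {U : AddSubgroup V} {w : ℕ → V} {n : ℕ}
    (hw : w n ∈ U) :
    mapDomain (mk' U) (partialSum k w (n + 1)) = mapDomain (mk' U) (partialSum k w n) := by
  rw [partialSum, sum_range_succ, mapDomain_add, mapDomain_sub, mapDomain_single,
    mapDomain_single, mk'_apply, (eq_zero_iff _).mpr hw, map_zero, sub_self, add_zero,
    partialSum]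

section Separated

variable {U : ℕ → AddSubgroup V} {w : ℕ → V} {N : ℕ → ℕ}

theorem mk_ne_zero_of_separated (hU : Antitone U) (hwN : ∀ i, w i ∉ U (N i)) {i n : ℕ}
    (hn : N i ≤ n) : (w i : V ⧸ U n) ≠ 0 :=
  fun h => hwN i (hU hn ((eq_zero_iff _).mp h))

theorem mk_ne_mk_of_separated (hU : Antitone U) (hwN : ∀ i, w i ∉ U (N i))
    (hsep : ∀ i j, i < j → w j ∈ U (N i)) {i j n : ℕ} (hij : i < j) (hn : N i ≤ n) :
    (w i : V ⧸ U n) ≠ w j := fun h =>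
  hwN i (by simpa using add_mem (hU hn (QuotientAddGroup.eq_iff_sub_mem.mp h)) (hsep i j hij))

theorem mapDomain_mk_partialSum_apply [Ring k] [Nontrivial k] (hU : Antitone U)
    (hN : Monotone N) (hwN : ∀ i, w i ∉ U (N i)) (hsep : ∀ i j, i < j → w j ∈ U (N i))
    {j n : ℕ} (hjn : j < n) (hNj : N j ≤ n) :
    mapDomain (mk' (U n)) (partialSum k w n) (w j) = 1 := by
  classical
  have hterm : ∀ i ∈ range n,
      (single (w i : V ⧸ U n) (1 : k) - single 0 1 : V ⧸ U n →₀ k) (w j) =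
        if i = j then 1 else 0 := by
    intro i _
    rw [Finsupp.sub_apply, single_apply, single_apply,
      if_neg (mk_ne_zero_of_separated hU hwN hNj).symm, sub_zero]
    rcases lt_trichotomy i j with hij | rfl | hji
    · rw [if_neg (mk_ne_mk_of_separated hU hwN hsep hij ((hN hij.le).trans hNj)),
        if_neg hij.ne]
    · simp
    · rw [if_neg (mk_ne_mk_of_separated hU hwN hsep hji hNj).symm, if_neg hji.ne']
  simp only [partialSum, mapDomain_finsetSum, mapDomain_sub, mapDomain_single, mk'_apply,
    QuotientAddGroup.mk_zero, Finset.sum_apply']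
  rw [sum_congr rfl hterm, Finset.sum_ite_eq', if_pos (mem_range.mpr hjn)]

theorem not_exists_mapDomain_mk_eq_partialSum [Ring k] [Nontrivial k] (hU : Antitone U)
    (hN : StrictMono N) (hwN : ∀ i, w i ∉ U (N i)) (hsep : ∀ i j, i < j → w j ∈ U (N i)) :
    ¬ ∃ x : V →₀ k, ∀ n, mapDomain (mk' (U n)) x = mapDomain (mk' (U n)) (partialSum k w n) := by
  classical
  rintro ⟨x, hx⟩
  set K := #x.support + 1
  set n := N K
  have hmaps : Set.MapsTo (fun j => (w j : V ⧸ U n)) (range K) (x.support.image (mk' (U n))) := by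
    intro j hj
    have hjK : j < K := mem_range.mp hj
    refine mapDomain_support (?_ : _ ∈ (mapDomain (mk' (U n)) x).support)
    rw [hx, mem_support_iff, mapDomain_mk_partialSum_apply hU hN.monotone hwN hsep
      (hjK.trans_le (hN.id_le K)) (hN.monotone hjK.le)]
    exact one_ne_zero
  have hinj : Set.InjOn (fun j => (w j : V ⧸ U n)) (range K) := by
    intro i hi j hj h
    by_contra hij
    rcases lt_or_gt_of_ne hij with hij | hji
    · exact mk_ne_mk_of_separated hU hwN hsep hij (hN.monotone (mem_range.mp hi).le) h
    · exact mk_ne_mk_of_separated hU hwN hsep hji (hN.monotone (mem_range.mp hj).le) h.symm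
  have hcard := (card_le_card_of_injOn _ hmaps hinj).trans card_image_le
  rw [card_range] at hcard
  omega

end Separated

end

theorem stmt_18 {k V : Type*} [CommRing k] [Nontrivial k] [AddCommGroup V]
    (U : ℕ → AddSubgroup V) (hU : ∀ n, U (n + 1) ≤ U n)
    (hinj : Function.Injective
      (fun x : V →₀ k => fun n : ℕ => Finsupp.mapDomain (QuotientAddGroup.mk' (U n)) x))
    (hsurj : ∀ s : (n : ℕ) → ((V ⧸ U n) →₀ k),
      (∀ n, Finsupp.mapDomain
          (QuotientAddGroup.map (U (n + 1)) (U n) (AddMonoidHom.id V)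
            (fun v hv => hU n hv)) (s (n + 1)) = s n) →
      ∃ x : V →₀ k, ∀ n, Finsupp.mapDomain (QuotientAddGroup.mk' (U n)) x = s n) :
    ∃ n, U n = ⊥ := by
  by_contra! hne
  have hU' : Antitone U := antitone_nat_of_succ_le hU
  obtain ⟨w, N, hN, hwU, hwN, hsep⟩ := exists_separated_seq hU' hne
    fun _ => eq_zero_of_forall_mem_of_injective_mapDomain_mk U hinj
  refine not_exists_mapDomain_mk_eq_partialSum hU' hN hwN hsep
    (hsurj (fun n => mapDomain (mk' (U n)) (partialSum k w n)) fun n => ?_)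
  rw [mapDomain_map_mapDomain_mk, mapDomain_mk_partialSum_succ (hwU n)]
end
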